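/- Let f : [0,∞) → ℝ have a unique global minimizer c ∈ (0,1], i.e., f(c) < f(t) for all t ∈ [0,∞) with t ≠ c (the paper additionally assumes the DPO-inducing condition: for every a > 0 and M ∈ ℝ there exists t ∈ (0,a) with (f(t) − f(0))/t < M). Fix n ≥ 2, a strict subset S ⊊ {1,…,n}, r ∈ ℝⁿ, q ∈ Δⁿ with qᵢ > 0 for all i, and β > 0, and suppose rᵢ ≤ max_{j∉S} rⱼ for all i ∈ S. Then every maximizer p of h(p) = Σᵢ rᵢ pᵢ − β Σ_{i∈S} qᵢ f(pᵢ/qᵢ) over Δⁿ satisfies pᵢ ≤ c · qᵢ for every i ∈ S. -/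

import Mathlib

open Finset

/-- The probability simplex Δⁿ in ℝⁿ (indexed by `Fin n`). -/
def simplex (n : ℕ) : Set (Fin n → ℝ) :=
  {p | (∀ i, 0 ≤ p i) ∧ ∑ i, p i = 1}

/-- The partial-sum objective `h(p) = Σᵢ rᵢ pᵢ − β Σ_{i∈S} qᵢ f(pᵢ/qᵢ)`, where
the regularization term runs only over in-sample indices `S`. -/
noncomputable def pobj (n : ℕ) (S : Finset (Fin n)) (r q : Fin n → ℝ) (β : ℝ)
    (f : ℝ → ℝ) (p : Fin n → ℝ) : ℝ :=
  (∑ i, r i * p i) - β * ∑ i ∈ S, q i * f (p i / q i)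

/-! If `pᵢ > c qᵢ` for some `i ∈ S`, move the excess mass `pᵢ - c qᵢ` to an out-of-sample
index `j` of maximal reward. The linear term does not decrease since `rᵢ ≤ rⱼ`, the
regularizer does not see coordinate `j`, and the term `qᵢ f(pᵢ/qᵢ)` strictly drops to
`qᵢ f(c)`, because `c` is the unique minimizer of `f`. This contradicts maximality. -/

section Transfer

variable {ι : Type*} [DecidableEq ι]

def transfer (p : ι → ℝ) (i j : ι) (a : ℝ) : ι → ℝ :=
  p + Pi.single j a - Pi.single i a

variable {p : ι → ℝ} {i j k : ι} {a : ℝ}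

lemma transfer_apply_of_ne (hki : k ≠ i) (hkj : k ≠ j) : transfer p i j a k = p k := by
  simp [transfer, hki, hkj]

lemma transfer_apply_left (hij : i ≠ j) : transfer p i j a i = p i - a := by
  simp [transfer, hij]

lemma transfer_apply_right (hij : i ≠ j) : transfer p i j a j = p j + a := by
  simp [transfer, hij.symm]

lemma sum_mul_transfer [Fintype ι] (g : ι → ℝ) :
    ∑ k, g k * transfer p i j a k = ∑ k, g k * p k + a * (g j - g i) := by
  simp only [transfer, Pi.sub_apply, Pi.add_apply, Pi.single_apply, mul_sub, mul_add, mul_ite, mul_zero,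
    sum_sub_distrib, sum_add_distrib, sum_ite_eq', mem_univ, ↓reduceIte]
  ring

end Transfer

lemma transfer_mem_simplex {n : ℕ} {p : Fin n → ℝ} {i j : Fin n} {a : ℝ} (hp : p ∈ simplex n)
    (hij : i ≠ j) (ha : 0 ≤ a) (hai : a ≤ p i) : transfer p i j a ∈ simplex n := by
  obtain ⟨hp_nonneg, hp_sum⟩ := hp
  refine ⟨fun k => ?_, ?_⟩
  · rcases eq_or_ne k i with rfl | hki
    · rw [transfer_apply_left hij]; linarith
    rcases eq_or_ne k j with rfl | hkj
    · rw [transfer_apply_right hij]; linarith [hp_nonneg k]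
    · rw [transfer_apply_of_ne hki hkj]; exact hp_nonneg k
  · simpa [hp_sum] using sum_mul_transfer (p := p) (i := i) (j := j) (a := a) (fun _ => 1)

lemma pobj_transfer {n : ℕ} {S : Finset (Fin n)} {r q : Fin n → ℝ} {β : ℝ} {f : ℝ → ℝ}
    {p : Fin n → ℝ} {i j : Fin n} {a : ℝ} (hi : i ∈ S) (hj : j ∉ S) :
    pobj n S r q β f (transfer p i j a) = pobj n S r q β f p + a * (r j - r i)
      - β * (q i * f ((p i - a) / q i) - q i * f (p i / q i)) := by
  have hij : i ≠ j := ne_of_mem_of_not_mem hi hj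
  have hreg : ∑ k ∈ S.erase i, q k * f (transfer p i j a k / q k)
      = ∑ k ∈ S.erase i, q k * f (p k / q k) :=
    Finset.sum_congr rfl fun k hk => by
      rw [transfer_apply_of_ne (ne_of_mem_erase hk) (ne_of_mem_of_not_mem (mem_of_mem_erase hk) hj)]
  unfold pobj
  rw [sum_mul_transfer, ← add_sum_erase S _ hi, ← add_sum_erase S (fun k => q k * f (p k / q k)) hi,
    hreg, transfer_apply_left hij]
  ring

theorem stmt9_general (f : ℝ → ℝ) (c : ℝ) (hc0 : 0 < c)
    (hmin : ∀ t : ℝ, 0 ≤ t → t ≠ c → f c < f t)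
    (n : ℕ) (S : Finset (Fin n))
    (hSc : (Sᶜ : Finset (Fin n)).Nonempty)
    (r q : Fin n → ℝ)
    (hq_pos : ∀ i, 0 < q i)
    (β : ℝ) (hβ : 0 < β)
    (hr : ∀ i ∈ S, r i ≤ (Sᶜ : Finset (Fin n)).sup' hSc r)
    (p : Fin n → ℝ) (hp : p ∈ simplex n)
    (hmax : ∀ p' ∈ simplex n, pobj n S r q β f p' ≤ pobj n S r q β f p) :
    ∀ i ∈ S, p i ≤ c * q i := by
  intro i hi
  by_contra! hexcess
  obtain ⟨j, hj, hj_max⟩ := exists_mem_eq_sup' hSc r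
  have hjS : j ∉ S := mem_compl.mp hj
  have hij : i ≠ j := ne_of_mem_of_not_mem hi hjS
  have hqi := hq_pos i
  set a := p i - c * q i
  have hcq : (p i - a) / q i = c := by field_simp; ring
  have hf_drop : f c < f (p i / q i) :=
    hmin _ (div_nonneg (hp.1 i) hqi.le) fun h => by
      rw [div_eq_iff hqi.ne'] at h; linarith
  have hgain : pobj n S r q β f p < pobj n S r q β f (transfer p i j a) := by
    rw [pobj_transfer hi hjS, hcq]
    have hr_ij : r i ≤ r j := hj_max ▸ hr i hi
    nlinarith [mul_pos hβ (mul_pos hqi (sub_pos.mpr hf_drop)), mul_nonneg (sub_nonneg.mpr hr_ij) (sub_pos.mpr hexcess).le]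
  have hmem : transfer p i j a ∈ simplex n :=
    transfer_mem_simplex hp hij (by linarith) (by nlinarith)
  exact (hmax _ hmem).not_gt hgain

/-- likelihood displacement: if `f` is DPO-inducing with unique
global minimizer `c ∈ (0,1]`, and every in-sample reward is at most the maximal
out-of-sample reward, then every maximizer `p` of the partial-sum objective over
the simplex satisfies `pᵢ ≤ c qᵢ` for all `i ∈ S`. -/
theorem stmt9 (f : ℝ → ℝ) (c : ℝ) (hc0 : 0 < c) (hc1 : c ≤ 1)
    (hmin : ∀ t : ℝ, 0 ≤ t → t ≠ c → f c < f t)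
    (hratio : ∀ a > (0 : ℝ), ∀ M : ℝ, ∃ t : ℝ, 0 < t ∧ t < a ∧ (f t - f 0) / t < M)
    (n : ℕ) (hn : 2 ≤ n) (S : Finset (Fin n)) (hS : S ⊂ Finset.univ)
    (hSc : (Sᶜ : Finset (Fin n)).Nonempty)
    (r q : Fin n → ℝ)
    (hq : q ∈ simplex n) (hq_pos : ∀ i, 0 < q i)
    (β : ℝ) (hβ : 0 < β)
    (hr : ∀ i ∈ S, r i ≤ (Sᶜ : Finset (Fin n)).sup' hSc r)
    (p : Fin n → ℝ) (hp : p ∈ simplex n)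
    (hmax : ∀ p' ∈ simplex n, pobj n S r q β f p' ≤ pobj n S r q β f p) :
    ∀ i ∈ S, p i ≤ c * q i :=
  stmt9_general f c hc0 hmin n S hSc r q hq_pos β hβ hr p hp hmax
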